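/- Let λ_n be as above and define b_n(z) = λ_n (λ_{n+1}/λ_n)^z for n ≥ 1. For 0 < c ≤ 1, N ≤ n, and |z| ≤ cN, assuming the inequalities λ_{n+1}^{k-1} λ_{n-k+1} ≤ λ_n^k for 1 ≤ k ≤ N-1, one has |b_n(z) - λ_n| < c ρ_{n,N}, where ρ_{n,N} = λ_n - λ_{n-N} = Σ_{k=0}^{N-1} 1/λ_{n-k}. -/

import Mathlib

/-! With `r = λ_{n+1}/λ_n ≥ 1` one has `|r^z - 1| ≤ r^{|z|} - 1`, and Bernoulli's inequality for
the base `r^N` and the exponent `|z|/N ≤ c` bounds this by `c (r^N - 1)`. It remains to show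
`λ_n (r^N - 1) < λ_n - λ_{n-N}`, i.e. `λ_{n+1}^N - λ_n^N < λ_n^{N-1} (λ_n - λ_{n-N})`, by induction
on `N`: the recursion `λ_{n+1}^2 = λ_n λ_{n+1} + 1` gives
`λ_{n+1}^{N+1} - λ_n^{N+1} = λ_n (λ_{n+1}^N - λ_n^N) + λ_{n+1}^{N-1}`, and the hypothesis on the
`λ`'s bounds the new term by `λ_n^N / λ_{n-N} = λ_n^N (λ_{n-N} - λ_{n-N-1})`. -/

noncomputable def lam : ℕ → ℝ
  | 0 => 0
  | n + 1 => (lam n + Real.sqrt (lam n ^ 2 + 4)) / 2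

lemma lam_succ_sq (n : ℕ) : lam (n + 1) ^ 2 = lam n * lam (n + 1) + 1 := by
  have h : Real.sqrt (lam n ^ 2 + 4) ^ 2 = lam n ^ 2 + 4 := Real.sq_sqrt (by positivity)
  simp only [lam]
  linear_combination h / 4

lemma lam_nonneg (n : ℕ) : 0 ≤ lam n := by
  cases n with
  | zero => simp [lam]
  | succ n =>
    have : |lam n| ≤ Real.sqrt (lam n ^ 2 + 4) := Real.abs_le_sqrt (by nlinarith)
    simp only [lam]
    linarith [neg_abs_le (lam n)]

lemma lam_succ_pos (n : ℕ) : 0 < lam (n + 1) := by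
  nlinarith [lam_succ_sq n, lam_nonneg n, lam_nonneg (n + 1)]

lemma lam_succ_sub_lam (n : ℕ) : lam (n + 1) - lam n = (lam (n + 1))⁻¹ := by
  have := (lam_succ_pos n).ne'
  field_simp
  linear_combination lam_succ_sq n

lemma lam_strictMono : StrictMono lam :=
  strictMono_nat_of_lt_succ fun n ↦ by
    have := lam_succ_sub_lam n
    have := inv_pos.2 (lam_succ_pos n)
    linarith

lemma lam_pos {n : ℕ} (hn : 1 ≤ n) : 0 < lam n := by
  simpa [lam] using lam_strictMono (show 0 < n by omega)

lemma lam_succ_pow_sub_pow_lt {n M : ℕ} (hM : M < n)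
    (hineq : ∀ j < M, lam (n + 1) ^ j * lam (n - j) ≤ lam n ^ (j + 1)) :
    lam (n + 1) ^ (M + 1) - lam n ^ (M + 1) < lam n ^ M * (lam n - lam (n - (M + 1))) := by
  induction M with
  | zero =>
    obtain ⟨m, rfl⟩ : ∃ m, n = m + 1 := ⟨n - 1, by omega⟩
    simp only [zero_add, pow_one, pow_zero, one_mul, add_tsub_cancel_right, lam_succ_sub_lam]
    exact inv_strictAnti₀ (lam_succ_pos m) (lam_strictMono (Nat.lt_add_one _))
  | succ M ih =>
    set μ := lam (n + 1)
    set l := lam n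
    set a := lam (n - (M + 1))
    set b := lam (n - (M + 2))
    have ha : 0 < a := lam_pos (by omega)
    have hgap : a - b = a⁻¹ := by
      have := lam_succ_sub_lam (n - (M + 2))
      rwa [show n - (M + 2) + 1 = n - (M + 1) by omega] at this
    have hμa : μ ^ M * a ≤ l ^ (M + 1) :=
      (mul_le_mul_of_nonneg_left (lam_strictMono.monotone (by omega))
        (pow_nonneg (lam_succ_pos n).le M)).trans (hineq M (by omega))
    have hnew : μ ^ M ≤ l ^ (M + 1) * (a - b) := by
      rwa [hgap, ← div_eq_mul_inv, le_div_iff₀ ha]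
    have hold := mul_lt_mul_of_pos_left (ih (by omega) fun j hj ↦ hineq j (by omega))
      (lam_pos (by omega) : 0 < l)
    calc μ ^ (M + 2) - l ^ (M + 2) = l * (μ ^ (M + 1) - l ^ (M + 1)) + μ ^ M := by
          linear_combination μ ^ M * lam_succ_sq n
      _ < l * (l ^ M * (l - a)) + l ^ (M + 1) * (a - b) := add_lt_add_of_lt_of_le hold hnew
      _ = l ^ (M + 1) * (l - b) := by ring

lemma lam_mul_div_pow_sub_one_lt {N n : ℕ} (hN : 1 ≤ N) (hn : N ≤ n)
    (hineq : ∀ k : ℕ, 1 ≤ k → k ≤ N - 1 →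
      lam (n + 1) ^ (k - 1) * lam (n - k + 1) ≤ lam n ^ k) :
    lam n * ((lam (n + 1) / lam n) ^ N - 1) < lam n - lam (n - N) := by
  obtain ⟨M, rfl⟩ : ∃ M, N = M + 1 := ⟨N - 1, by omega⟩
  have hl : 0 < lam n := lam_pos (by omega)
  have h := lam_succ_pow_sub_pow_lt (by omega : M < n) fun j hj ↦ by
    simpa [show n - (j + 1) + 1 = n - j by omega] using hineq (j + 1) (by omega) (by omega)
  calc lam n * ((lam (n + 1) / lam n) ^ (M + 1) - 1)
      = (lam (n + 1) ^ (M + 1) - lam n ^ (M + 1)) / lam n ^ M := by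
        rw [div_pow, pow_succ (lam n) M]
        field_simp
    _ < lam n - lam (n - (M + 1)) := by
        rwa [div_lt_iff₀ (by positivity), mul_comm]

lemma Complex.norm_exp_sub_one_le_exp_norm_sub_one (w : ℂ) :
    ‖Complex.exp w - 1‖ ≤ Real.exp ‖w‖ - 1 := by
  simpa using Complex.norm_exp_sub_sum_le_exp_norm_sub_sum w 1

lemma Complex.norm_exp_mul_log_sub_one_le {a : ℝ} (ha : 1 ≤ a) {z : ℂ} (hz : ‖z‖ ≤ 1) :
    ‖Complex.exp (z * Real.log a) - 1‖ ≤ ‖z‖ * (a - 1) := by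
  have hlog : 0 ≤ Real.log a := Real.log_nonneg ha
  calc ‖Complex.exp (z * Real.log a) - 1‖ ≤ Real.exp (‖z‖ * Real.log a) - 1 := by
        simpa [abs_of_nonneg hlog] using norm_exp_sub_one_le_exp_norm_sub_one (z * Real.log a)
    _ = (1 + (a - 1)) ^ ‖z‖ - 1 := by
        rw [add_sub_cancel, Real.rpow_def_of_pos (by linarith), mul_comm]
    _ ≤ ‖z‖ * (a - 1) := by
        linarith [rpow_one_add_le_one_add_mul_self (by linarith : -1 ≤ a - 1)
          (norm_nonneg z) hz]

lemma Complex.norm_exp_mul_log_sub_one_le_of_norm_le_mul {r c : ℝ} (hr : 1 ≤ r) (hc : c ≤ 1)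
    {N : ℕ} (hN : 1 ≤ N) {z : ℂ} (hz : ‖z‖ ≤ c * N) :
    ‖Complex.exp (z * Real.log r) - 1‖ ≤ c * (r ^ N - 1) := by
  have hN' : (0 : ℝ) < N := by exact_mod_cast hN
  have hzN : ‖z / N‖ ≤ c := by
    rwa [norm_div, Complex.norm_natCast, div_le_iff₀ hN']
  calc ‖Complex.exp (z * Real.log r) - 1‖ = ‖Complex.exp (z / N * Real.log (r ^ N)) - 1‖ := by
        rw [Real.log_pow]
        congr 3
        push_cast
        have hN0 : (N : ℂ) ≠ 0 := Nat.cast_ne_zero.2 (by omega)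
        field_simp
    _ ≤ ‖z / N‖ * (r ^ N - 1) := norm_exp_mul_log_sub_one_le (one_le_pow₀ hr) (hzN.trans hc)
    _ ≤ c * (r ^ N - 1) := by
        gcongr
        exact sub_nonneg.2 (one_le_pow₀ hr)

theorem stmt_15 (N n : ℕ) (hN : 1 ≤ N) (hn : N ≤ n) (c : ℝ) (hc0 : 0 < c) (hc1 : c ≤ 1)
    (hineq : ∀ k : ℕ, 1 ≤ k → k ≤ N - 1 →
      lam (n + 1) ^ (k - 1) * lam (n - k + 1) ≤ lam n ^ k)
    (z : ℂ) (hz : ‖z‖ ≤ c * N) :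
    ‖(lam n : ℂ) * Complex.exp (z * Real.log (lam (n + 1) / lam n)) - lam n‖
      < c * (lam n - lam (n - N)) := by
  set r := lam (n + 1) / lam n
  have hl : 0 < lam n := lam_pos (hN.trans hn)
  have hr : 1 ≤ r := (one_le_div hl).2 (lam_strictMono (Nat.lt_add_one n)).le
  calc ‖(lam n : ℂ) * Complex.exp (z * Real.log r) - lam n‖
      = lam n * ‖Complex.exp (z * Real.log r) - 1‖ := by
        rw [← mul_sub_one, norm_mul, Complex.norm_of_nonneg hl.le]
    _ ≤ lam n * (c * (r ^ N - 1)) := by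
        gcongr
        exact Complex.norm_exp_mul_log_sub_one_le_of_norm_le_mul hr hc1 hN hz
    _ = c * (lam n * (r ^ N - 1)) := by ring
    _ < c * (lam n - lam (n - N)) := by
        gcongr
        exact lam_mul_div_pow_sub_one_lt hN hn hineq
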